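/- Let Λ be an artin algebra whose Jacobson radical J satisfies Jⁿ = 0 for some n ≥ 2, and let M be a finitely generated Gorenstein projective Λ-module having no nonzero projective direct summands. Then J^{n-1} M = 0 and J^{n-2} M is a semisimple Λ-module. -/

import Mathlib

universe u

/-! Basic notions from the representation theory of artin algebras.

An artin algebra is an algebra `Λ` over a commutative artinian ring `R` which is finitely
generated as an `R`-module.  All modules considered are (finitely generated) left
`Λ`-modules. -/

/-- A (cochain) complex of projective `Λ`-modules which is totally acyclic: it is acyclic, and
applying `Hom_Λ(-, Q)` to it yields an acyclic complex for every projective `Λ`-module `Q`. -/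
structure TotallyAcyclicComplex (Λ : Type u) [Ring Λ] where
  X : ℤ → Type u
  [acg : ∀ i, AddCommGroup (X i)]
  [mods : ∀ i, Module Λ (X i)]
  proj : ∀ i, Module.Projective Λ (X i)
  d : ∀ i, X i →ₗ[Λ] X (i + 1)
  dd : ∀ i, (d (i + 1)).comp (d i) = 0
  acyclic : ∀ i, LinearMap.range (d i) = LinearMap.ker (d (i + 1))
  totally : ∀ (Q : Type u) [AddCommGroup Q] [Module Λ Q], Module.Projective Λ Q →
    ∀ (i : ℤ) (g : X (i + 1) →ₗ[Λ] Q), g.comp (d i) = 0 →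
      ∃ h : X (i + 1 + 1) →ₗ[Λ] Q, h.comp (d (i + 1)) = g

attribute [instance] TotallyAcyclicComplex.acg TotallyAcyclicComplex.mods

/-- `M` is Gorenstein projective if it is isomorphic to the zeroth cocycle `Z⁰ = ker (d 0)` of a
totally acyclic complex of projective `Λ`-modules. -/
def IsGorensteinProjective (Λ : Type u) [Ring Λ] (M : Type u) [AddCommGroup M]
    [Module Λ M] : Prop :=
  ∃ C : TotallyAcyclicComplex Λ, Nonempty (M ≃ₗ[Λ] LinearMap.ker (C.d 0))

/-- A submodule `N ≤ P` is superfluous if `K ⊔ N = ⊤` forces `K = ⊤`. -/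
def IsSuperfluous {Λ : Type u} [Ring Λ] {P : Type u} [AddCommGroup P] [Module Λ P]
    (N : Submodule Λ P) : Prop :=
  ∀ K : Submodule Λ P, K ⊔ N = ⊤ → K = ⊤

/-- `p : P → M` is a projective cover: `P` is projective, `p` is surjective and `ker p` is
superfluous in `P`. -/
def IsProjectiveCover {Λ : Type u} [Ring Λ] {P M : Type u} [AddCommGroup P] [Module Λ P]
    [AddCommGroup M] [Module Λ M] (p : P →ₗ[Λ] M) : Prop :=
  Module.Projective Λ P ∧ Function.Surjective p ∧ IsSuperfluous (LinearMap.ker p)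

/-- An indecomposable module: nonzero, and admitting no nontrivial direct sum decomposition. -/
def IsIndecomposable (Λ : Type u) [Ring Λ] (M : Type u) [AddCommGroup M] [Module Λ M] : Prop :=
  Nontrivial M ∧ ∀ N N' : Submodule Λ M, IsCompl N N' → N = ⊥ ∨ N = ⊤

/-- A splittable monomorphism (section). -/
def IsSplitMono {Λ : Type u} [Ring Λ] {A B : Type u} [AddCommGroup A] [Module Λ A]
    [AddCommGroup B] [Module Λ B] (f : A →ₗ[Λ] B) : Prop :=
  ∃ r : B →ₗ[Λ] A, r.comp f = LinearMap.id

/-- A splittable epimorphism (retraction). -/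
def IsSplitEpi {Λ : Type u} [Ring Λ] {A B : Type u} [AddCommGroup A] [Module Λ A]
    [AddCommGroup B] [Module Λ B] (f : A →ₗ[Λ] B) : Prop :=
  ∃ s : B →ₗ[Λ] A, f.comp s = LinearMap.id

/-- An irreducible morphism in the category of finitely generated `Λ`-modules:
it is neither a splittable proper epimorphism nor a splittable proper monomorphism, and in any
factorization `f = h ∘ g` either `h` is a splittable epimorphism or `g` is a splittable
monomorphism. -/
def IsIrreducibleHom (Λ : Type u) [Ring Λ] {B C : Type u} [AddCommGroup B] [Module Λ B]
    [AddCommGroup C] [Module Λ C] (f : B →ₗ[Λ] C) : Prop :=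
  ¬ (IsSplitEpi f ∧ ¬ Function.Bijective f) ∧
  ¬ (IsSplitMono f ∧ ¬ Function.Bijective f) ∧
  ∀ (Z : Type u) [AddCommGroup Z] [Module Λ Z] [Module.Finite Λ Z]
    (g : B →ₗ[Λ] Z) (h : Z →ₗ[Λ] C), h.comp g = f → IsSplitEpi h ∨ IsSplitMono g

/-- A left almost split morphism in the category of finitely generated `Λ`-modules. -/
def IsLeftAlmostSplit (Λ : Type u) [Ring Λ] {A B : Type u} [AddCommGroup A] [Module Λ A]
    [AddCommGroup B] [Module Λ B] (f : A →ₗ[Λ] B) : Prop :=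
  ¬ IsSplitMono f ∧
  ∀ (X : Type u) [AddCommGroup X] [Module Λ X] [Module.Finite Λ X] (u : A →ₗ[Λ] X),
    ¬ IsSplitMono u → ∃ v : B →ₗ[Λ] X, v.comp f = u

/-- A right almost split morphism in the category of finitely generated `Λ`-modules. -/
def IsRightAlmostSplit (Λ : Type u) [Ring Λ] {B C : Type u} [AddCommGroup B] [Module Λ B]
    [AddCommGroup C] [Module Λ C] (g : B →ₗ[Λ] C) : Prop :=
  ¬ IsSplitEpi g ∧
  ∀ (Y : Type u) [AddCommGroup Y] [Module Λ Y] [Module.Finite Λ Y] (u : Y →ₗ[Λ] C),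
    ¬ IsSplitEpi u → ∃ v : Y →ₗ[Λ] B, g.comp v = u

/-- `0 → A →f B →g C → 0` is an almost split (Auslander–Reiten) sequence: it is a
short exact sequence, `f` is left almost split and `g` is right almost split. -/
def IsAlmostSplitSequence (Λ : Type u) [Ring Λ] {A B C : Type u} [AddCommGroup A] [Module Λ A]
    [AddCommGroup B] [Module Λ B] [AddCommGroup C] [Module Λ C]
    (f : A →ₗ[Λ] B) (g : B →ₗ[Λ] C) : Prop :=
  Function.Injective f ∧ Function.Surjective g ∧ LinearMap.range f = LinearMap.ker g ∧
  IsLeftAlmostSplit Λ f ∧ IsRightAlmostSplit Λ g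

/-- The product `I • N` of an ideal with a submodule: the span of products `a • m` with `a ∈ I`,
`m ∈ N`.  (Stated so as to make sense over a noncommutative ring.) -/
def idealSmul {Λ : Type u} [Ring Λ] (I : Ideal Λ) {M : Type u} [AddCommGroup M] [Module Λ M]
    (N : Submodule Λ M) : Submodule Λ M :=
  Submodule.span Λ {x | ∃ a ∈ I, ∃ m ∈ N, x = a • m}

/-- `radPow Λ M k` is the submodule `Jᵏ M` of `M`, where `J` is the Jacobson radical of `Λ`.
In particular `radPow Λ Λ k` is the ideal `Jᵏ`. -/
def radPow (Λ : Type u) [Ring Λ] (M : Type u) [AddCommGroup M] [Module Λ M] :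
    ℕ → Submodule Λ M
  | 0 => ⊤
  | k + 1 => idealSmul ((⊥ : Ideal Λ).jacobson) (radPow Λ M k)

/-! A Gorenstein projective module `M` embeds, as `Z⁰`, into the projective module `X⁰`.
If some element of `M` were not in `J X⁰`, a functional `f : X⁰ → Λ` would send it outside `J`,
so the left ideal `f(M)` would not lie in `J`. As `Λ/J` is semisimple and `J` is nilpotent,
`f(M)` then contains a nonzero idempotent `e`, and `m ↦ f(m) e` splits off the projective summand
`Λe` of `M`. Hence `M ⊆ J X⁰`, so `J^{n-1} M ⊆ Jⁿ X⁰ = 0`; then `J^{n-2} M` is annihilated by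
`J`, i.e. it is a module over the semisimple ring `Λ/J`. -/

open Submodule

section RadicalPowers

variable {Λ : Type u} [Ring Λ] {M P : Type u} [AddCommGroup M] [Module Λ M]
  [AddCommGroup P] [Module Λ P]

theorem idealSmul_eq_smul (I : Ideal Λ) (N : Submodule Λ M) : idealSmul I N = I • N :=
  le_antisymm (span_le.2 fun _ ⟨_, ha, _, hm, hx⟩ => hx ▸ smul_mem_smul ha hm)
    (smul_le.2 fun a ha m hm => subset_span ⟨a, ha, m, hm, rfl⟩)

theorem radPow_succ (k : ℕ) : radPow Λ M (k + 1) = Ring.jacobson Λ • radPow Λ M k := by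
  rw [radPow, idealSmul_eq_smul, Ideal.jacobson_bot]

theorem radPow_le_smul_top (k : ℕ) : radPow Λ M k ≤ radPow Λ Λ k • (⊤ : Submodule Λ M) := by
  induction k with
  | zero => simp [radPow]
  | succ k ih =>
    rw [radPow_succ, radPow_succ, Submodule.smul_assoc]
    exact smul_mono_right _ ih

theorem radPow_eq_bot {n : ℕ} (h : radPow Λ Λ n = ⊥) : radPow Λ M n = ⊥ :=
  le_bot_iff.1 <| (radPow_le_smul_top n).trans_eq <| by rw [h, bot_smul]

theorem map_radPow_le_radPow_succ (f : M →ₗ[Λ] P)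
    (hf : LinearMap.range f ≤ Ring.jacobson Λ • (⊤ : Submodule Λ P)) (k : ℕ) :
    (radPow Λ M k).map f ≤ radPow Λ P (k + 1) := by
  induction k with
  | zero => rwa [radPow, ← LinearMap.range_eq_map, radPow_succ, radPow]
  | succ k ih =>
    rw [radPow_succ, map_smul'', radPow_succ (k + 1)]
    exact smul_mono_right _ ih

end RadicalPowers

section Semiprimary

variable {Λ : Type u} [Ring Λ]

theorem one_sub_one_sub_pow_mem {I : Submodule Λ Λ} {y : Λ} (hy : y ∈ I) (m : ℕ) :
    1 - (1 - y) ^ m ∈ I := by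
  -- `sub_dvd_pow_sub_pow` yields a right factor of `y`; in `Λᵐᵒᵖ` it becomes a left one.
  obtain ⟨k, hk⟩ := (Commute.one_left (MulOpposite.op (1 - y))).sub_dvd_pow_sub_pow m
  have hk' : 1 - (1 - y) ^ m = MulOpposite.unop k * y := by
    simpa using congrArg MulOpposite.unop hk
  rw [hk']
  exact I.smul_mem _ hy

theorem exists_isIdempotentElem_mem_of_not_le_jacobson [IsSemiprimaryRing Λ]
    {I : Submodule Λ Λ} (hI : ¬ I ≤ Ring.jacobson Λ) :
    ∃ e ∈ I, IsIdempotentElem e ∧ e ≠ 0 := by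
  let π := Ideal.Quotient.mk (Ring.jacobson Λ)
  obtain ⟨ē, hē, hIē⟩ := IsSemisimpleRing.ideal_eq_span_idempotent (Ideal.map π I)
  have hēI : ē ∈ Ideal.map π I := hIē ▸ Ideal.mem_span_singleton_self ē
  obtain ⟨i, hiI, rfl⟩ := (Ideal.mem_map_iff_of_surjective π Ideal.Quotient.mk_surjective).1 hēI
  have hπi : π i ≠ 0 := fun h => hI <| by
    rwa [h, Ideal.span_singleton_eq_bot.2 rfl, Ideal.map_eq_bot_iff_le_ker,
      Ideal.mk_ker] at hIē
  obtain ⟨m, hm⟩ : IsNilpotent (i - i ^ 2) := by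
    have hmem : i - i ^ 2 ∈ Ring.jacobson Λ :=
      Ideal.Quotient.eq_zero_iff_mem.1 (by rw [map_sub, map_pow, sq, hē.eq, sub_self])
    obtain ⟨m, hm⟩ := IsSemiprimaryRing.isNilpotent (R := Λ)
    exact ⟨m, by simpa [hm] using Ideal.pow_mem_pow hmem m⟩
  obtain _ | m := m
  · rw [pow_zero] at hm
    exact (hπi (by rw [← mul_one i, hm, mul_zero, map_zero])).elim
  have hpow : i ^ (m + 1) ∈ I := by
    rw [pow_succ]
    exact I.smul_mem (i ^ m) hiI
  refine ⟨_, one_sub_one_sub_pow_mem hpow _, isIdempotentElem_one_sub_one_sub_pow_pow _ _ hm,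
    fun h0 => hπi ?_⟩
  simpa only [map_sub, map_one, map_pow, hē.pow_succ_eq, hē.one_sub.pow_succ_eq,
    sub_sub_cancel, map_zero] using congrArg π h0

end Semiprimary

section ProjectiveSummands

variable {Λ : Type u} [Ring Λ] {M P : Type u} [AddCommGroup M] [Module Λ M]
  [AddCommGroup P] [Module Λ P]

theorem exists_isCompl_linearEquiv_of_surjective [Module.Projective Λ P] (g : M →ₗ[Λ] P)
    (hg : Function.Surjective g) :
    ∃ N N' : Submodule Λ M, IsCompl N N' ∧ Nonempty (N ≃ₗ[Λ] P) := by
  obtain ⟨s, hs⟩ := g.exists_rightInverse_of_surjective (LinearMap.range_eq_top.2 hg)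
  have hidem : IsIdempotentElem (s ∘ₗ g) := by
    rw [IsIdempotentElem, Module.End.mul_eq_comp, LinearMap.comp_assoc,
      ← LinearMap.comp_assoc g, hs, LinearMap.id_comp]
  have hleft : Function.LeftInverse g s := LinearMap.congr_fun hs
  refine ⟨_, _, LinearMap.IsIdempotentElem.isCompl hidem, ⟨?_⟩⟩
  rw [LinearMap.range_comp_of_range_eq_top s (LinearMap.range_eq_top.2 hg)]
  exact (LinearEquiv.ofLeftInverse hleft).symm

theorem IsIdempotentElem.projective_span_singleton {e : Λ} (he : IsIdempotentElem e) :
    Module.Projective Λ (span Λ {e}) := by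
  refine .of_split (span Λ {e}).subtype
    ((LinearMap.toSpanSingleton Λ Λ e).codRestrict _ fun c => mem_span_singleton.2 ⟨c, rfl⟩) ?_
  ext ⟨x, hx⟩
  obtain ⟨c, rfl⟩ := mem_span_singleton.1 hx
  simp [smul_eq_mul, mul_assoc, he.eq]

theorem exists_projective_summand_of_range_not_le_jacobson [IsSemiprimaryRing Λ]
    (f : M →ₗ[Λ] Λ) (hf : ¬ LinearMap.range f ≤ Ring.jacobson Λ) :
    ∃ N N' : Submodule Λ M, IsCompl N N' ∧ Module.Projective Λ N ∧ N ≠ ⊥ := by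
  obtain ⟨e, ⟨m₀, rfl⟩, he, he0⟩ := exists_isIdempotentElem_mem_of_not_le_jacobson hf
  have := he.projective_span_singleton
  let g : M →ₗ[Λ] span Λ {f m₀} := (LinearMap.toSpanSingleton Λ Λ (f m₀) ∘ₗ f).codRestrict _
    fun m => mem_span_singleton.2 ⟨f m, rfl⟩
  have hg : Function.Surjective g := by
    rintro ⟨_, hx⟩
    obtain ⟨c, rfl⟩ := mem_span_singleton.1 hx
    exact ⟨c • m₀, Subtype.ext <| by simp [g, he.eq]⟩
  obtain ⟨N, N', hNN', ⟨φ⟩⟩ := exists_isCompl_linearEquiv_of_surjective g hg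
  have : Nontrivial (span Λ {f m₀}) :=
    ⟨⟨⟨_, mem_span_singleton_self _⟩, 0, by simpa [Subtype.ext_iff] using he0⟩⟩
  exact ⟨N, N', hNN', .of_equiv φ.symm, nontrivial_iff_ne_bot.1 φ.toEquiv.nontrivial⟩

theorem Module.Projective.mem_smul_top_of_forall_dual_mem [Module.Projective Λ P] {I : Ideal Λ}
    {x : P} (hx : ∀ φ : P →ₗ[Λ] Λ, φ x ∈ I) : x ∈ I • (⊤ : Submodule Λ P) := by
  obtain ⟨s, hs⟩ := Module.projective_def'.1 ‹Module.Projective Λ P›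
  rw [← LinearMap.id_apply (R := Λ) x, ← hs, LinearMap.comp_apply,
    Finsupp.linearCombination_apply]
  exact sum_mem fun p _ => smul_mem_smul (hx (Finsupp.lapply p ∘ₗ s)) mem_top

theorem range_le_jacobson_smul_top_of_projective_summand_eq_bot [IsSemiprimaryRing Λ]
    [Module.Projective Λ P] (f : M →ₗ[Λ] P)
    (hM : ∀ N N' : Submodule Λ M, IsCompl N N' → Module.Projective Λ N → N = ⊥) :
    LinearMap.range f ≤ Ring.jacobson Λ • (⊤ : Submodule Λ P) := by
  rintro _ ⟨m, rfl⟩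
  refine Module.Projective.mem_smul_top_of_forall_dual_mem fun φ => by_contra fun hφ => ?_
  obtain ⟨N, N', hNN', hN, hN0⟩ :=
    exists_projective_summand_of_range_not_le_jacobson (φ ∘ₗ f) fun h => hφ (h ⟨m, rfl⟩)
  exact hN0 (hM N N' hNN' hN)

end ProjectiveSummands

theorem isSemisimpleModule_of_smul_eq_bot {Λ : Type u} [Ring Λ] {M : Type u} [AddCommGroup M]
    [Module Λ M] {I : Ideal Λ} [I.IsTwoSided] [IsSemisimpleRing (Λ ⧸ I)] {N : Submodule Λ M}
    (h : I • N = ⊥) : IsSemisimpleModule Λ N := by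
  have hN : Module.IsTorsionBySet Λ N I := fun x a =>
    Subtype.ext <| (mem_bot Λ).1 (h ▸ smul_mem_smul a.2 x.2)
  let := hN.module
  exact hN.isSemisimpleModule_iff.1 inferInstance

theorem radical_power_of_Gorenstein_projective_without_projective_summands_general
    (R : Type u) [CommRing R] [IsArtinianRing R]
    (Λ : Type u) [Ring Λ] [Algebra R Λ] [Module.Finite R Λ]
    (n : ℕ) (hn : 2 ≤ n) (hJn : radPow Λ Λ n = ⊥)
    (M : Type u) [AddCommGroup M] [Module Λ M]
    (hM : IsGorensteinProjective Λ M)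
    (hsummand : ∀ N N' : Submodule Λ M, IsCompl N N' → Module.Projective Λ ↥N → N = ⊥) :
    radPow Λ M (n - 1) = ⊥ ∧ IsSemisimpleModule Λ ↥(radPow Λ M (n - 2)) := by
  have : IsArtinianRing Λ := .of_finite R Λ
  obtain ⟨C, ⟨e⟩⟩ := hM
  have := C.proj 0
  let ι : M →ₗ[Λ] C.X 0 := (LinearMap.ker (C.d 0)).subtype ∘ₗ e.toLinearMap
  have hι := range_le_jacobson_smul_top_of_projective_summand_eq_bot ι hsummand
  have hrad : radPow Λ M (n - 1) = ⊥ := by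
    have := map_radPow_le_radPow_succ ι hι (n - 1)
    rw [Nat.sub_add_cancel (by omega), radPow_eq_bot hJn, le_bot_iff, ← map_bot ι] at this
    exact map_injective_of_injective (Subtype.val_injective.comp e.injective) this
  refine ⟨hrad, isSemisimpleModule_of_smul_eq_bot (I := Ring.jacobson Λ) ?_⟩
  rw [← radPow_succ, show n - 2 + 1 = n - 1 by omega, hrad]

/-- Let `Λ` be an artin algebra with `Jⁿ = 0` for some `n ≥ 2`, and let `M`
be a finitely generated Gorenstein projective `Λ`-module without nonzero projective direct
summands.  Then `Jⁿ⁻¹M = 0` and `Jⁿ⁻²M` is semisimple. -/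
theorem radical_power_of_Gorenstein_projective_without_projective_summands
    (R : Type u) [CommRing R] [IsArtinianRing R]
    (Λ : Type u) [Ring Λ] [Algebra R Λ] [Module.Finite R Λ]
    (n : ℕ) (hn : 2 ≤ n) (hJn : radPow Λ Λ n = ⊥)
    (M : Type u) [AddCommGroup M] [Module Λ M] [Module.Finite Λ M]
    (hM : IsGorensteinProjective Λ M)
    (hsummand : ∀ N N' : Submodule Λ M, IsCompl N N' → Module.Projective Λ ↥N → N = ⊥) :
    radPow Λ M (n - 1) = ⊥ ∧ IsSemisimpleModule Λ ↥(radPow Λ M (n - 2)) :=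
  radical_power_of_Gorenstein_projective_without_projective_summands_general R Λ n hn hJn M hM
    hsummand
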